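/- arXiv:2402.08340 — 3 statements merged into one kernel-verified Lean document; each statement's English description precedes it below -/
import Mathlib

section
/- Let a, r ∈ ℕ and k ∈ ℤ. Then q^{-ra(a+1)/2}·𝒜_{a,k,r}(q) = ∏_{n≥1} 1/((1−q^{rn})(1−q^n)^k) + O(q^{a+1}); that is, for every integer 0 ≤ m ≤ a, the coefficient c_{a,k,r}(m + ra(a+1)/2) equals the coefficient of q^m in the formal power series ∏_{n≥1} (1−q^{rn})^{-1}(1−q^n)^{-k}. -/
/-!
Encode a tuple `1 ≤ f₀ < ⋯ < f_{a-1}` by its gaps `e`; then `∑ f = a(a+1)/2 + w(e)` with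
`w(e) = ∑ₜ (t + 1) eₜ`, so the summand of `f` contributes the `q^m` coefficient of
`q^{r w(e)} ∏ⱼ (1 - q^{fⱼ})^{-k}`. When `r w(e) ≤ m ≤ a` the weight is too small to leave a hole
among `1, …, m - r w(e)`, so these are the first entries of `f` and all other entries are too large
to matter: the product may be replaced by `∏_{n ≤ m} (1 - q^n)^{-k}`. What is left is
`∑ₑ q^{r w(e)}` modulo `q^{m+1}`, a sum over unconstrained gap vectors that factors as
`∏_{t < a} (1 - q^{r(t+1)})⁻¹`; its factors with `t ≥ m` are `≡ 1`.
-/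

open PowerSeries Finset
open scoped Classical

noncomputable section

/-- `(1 - q^n)^(-k)` in `ℚ⟦q⟧`, for `k : ℤ` (for negative `k` this is the
power `(1 - q^n)^{|k|}`). -/
def dFac (n : ℕ) (k : ℤ) : PowerSeries ℚ :=
  if 0 ≤ k then ((1 - (X : PowerSeries ℚ) ^ n)⁻¹) ^ k.toNat
  else (1 - (X : PowerSeries ℚ) ^ n) ^ (-k).toNat

/-- Strictly increasing `a`-tuples `1 ≤ n₁ < n₂ < ⋯ < n_a ≤ N`. -/
def strictTuples (a N : ℕ) : Finset (Fin a → ℕ) :=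
  (Fintype.piFinset fun _ : Fin a => Finset.Icc 1 N).filter fun f => StrictMono f

/-- The coefficient `c_{a,k,r}(N)` of `q^N` in
`𝒜_{a,k,r}(q) = Σ_{1≤n₁<⋯<n_a} q^{r(n₁+⋯+n_a)} / ∏_j (1-q^{n_j})^k`.
Since `r ≥ 1`, tuples containing an entry `> N` contribute `0` to the coefficient of `q^N`,
so the (q-adically convergent) infinite sum can be truncated to entries in `[1, N]`. -/
def Acoeff (a : ℕ) (k : ℤ) (r : ℕ) (N : ℕ) : ℚ :=
  ∑ f ∈ strictTuples a N,
    PowerSeries.coeff (R := ℚ) N ((X : PowerSeries ℚ) ^ (r * ∑ j, f j) * ∏ j, dFac (f j) k)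

theorem SModEq.of_mul_eq_one {R : Type*} [CommRing R] {I : Ideal R} {u v w : R} (huv : u * v = 1)
    (huw : u * w ≡ 1 [SMOD I]) : w ≡ v [SMOD I] :=
  calc w = v * (u * w) := by rw [← mul_assoc, mul_comm v u, huv, one_mul]
    _ ≡ v * 1 [SMOD I] := (SModEq.refl v).mul huw
    _ = v := mul_one v

theorem Finset.prod_smodEq_prod_of_subset {R ι : Type*} [CommRing R] [DecidableEq ι] {I : Ideal R}
    {s t : Finset ι} {F : ι → R} (hst : s ⊆ t) (h : ∀ i ∈ t \ s, F i ≡ 1 [SMOD I]) :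
    ∏ i ∈ t, F i ≡ ∏ i ∈ s, F i [SMOD I] := by
  rw [← prod_sdiff hst]
  simpa using (SModEq.prod h).mul (SModEq.refl (∏ i ∈ s, F i))

theorem Finset.sum_smodEq_sum_filter {R M ι : Type*} [Ring R] [AddCommGroup M] [Module R M]
    {U : Submodule R M} {s : Finset ι} (p : ι → Prop) [DecidablePred p] {F : ι → M}
    (h : ∀ i ∈ s, ¬ p i → F i ≡ 0 [SMOD U]) :
    ∑ i ∈ s, F i ≡ ∑ i ∈ s with p i, F i [SMOD U] := by
  rw [← sum_filter_add_sum_filter_not s p]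
  simpa using
    (SModEq.refl _).add (SModEq.sum fun i hi => h i (mem_filter.1 hi).1 (mem_filter.1 hi).2)

theorem Fin.sum_univ_val_add_one (a : ℕ) : ∑ t : Fin a, ((t : ℕ) + 1) = a * (a + 1) / 2 := by
  rw [Fin.sum_univ_eq_sum_range (· + 1), ← add_zero (∑ i ∈ range a, (i + 1)),
    ← sum_range_succ' (fun i => i), sum_range_id, Nat.add_sub_cancel, Nat.mul_comm]

theorem Fin.prod_univ_val_add_one {M : Type*} [CommMonoid M] (a : ℕ) (G : ℕ → M) :
    ∏ t : Fin a, G ((t : ℕ) + 1) = ∏ n ∈ Icc 1 a, G n := by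
  rw [Fin.prod_univ_eq_prod_range (fun i => G (i + 1)), range_eq_Ico, prod_Ico_add']
  rfl

namespace PowerSeries

section CommRing

variable {R : Type*} [CommRing R]

theorem smodEq_X_pow_iff {A B : R⟦X⟧} {n : ℕ} :
    A ≡ B [SMOD Ideal.span {X ^ n}] ↔ ∀ i < n, coeff i A = coeff i B := by
  simp only [SModEq.sub_mem, Ideal.mem_span_singleton, X_pow_dvd_iff, map_sub, sub_eq_zero]

theorem X_pow_smodEq_zero {n c : ℕ} (h : n ≤ c) :
    (X : R⟦X⟧) ^ c ≡ 0 [SMOD Ideal.span {X ^ n}] :=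
  SModEq.zero.2 (Ideal.mem_span_singleton.2 (pow_dvd_pow X h))

theorem X_pow_mul_smodEq {A B : R⟦X⟧} {n : ℕ} (h : A ≡ B [SMOD Ideal.span {X ^ n}]) (c : ℕ) :
    X ^ c * A ≡ X ^ c * B [SMOD Ideal.span {X ^ (c + n)}] := by
  rw [SModEq.sub_mem, Ideal.mem_span_singleton] at h ⊢
  rw [← mul_sub, pow_add]
  exact mul_dvd_mul_left _ h

end CommRing

section Field

variable {K : Type*} [Field K]

theorem one_sub_X_pow_mul_inv {c : ℕ} (hc : 0 < c) : (1 - X ^ c : K⟦X⟧) * (1 - X ^ c)⁻¹ = 1 :=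
  PowerSeries.mul_inv_cancel _ (by simp [hc.ne'])

theorem inv_one_sub_X_pow_smodEq_one {d c : ℕ} (h : d < c) :
    (1 - X ^ c : K⟦X⟧)⁻¹ ≡ 1 [SMOD Ideal.span {X ^ (d + 1)}] :=
  (SModEq.of_mul_eq_one (one_sub_X_pow_mul_inv (by omega))
    (by simpa using (SModEq.refl (1 : K⟦X⟧)).sub (X_pow_smodEq_zero h))).symm

theorem geom_sum_X_pow_smodEq_inv {c : ℕ} (hc : 0 < c) (d : ℕ) :
    ∑ i ∈ range (d + 1), (X : K⟦X⟧) ^ (c * i) ≡ (1 - X ^ c)⁻¹ [SMOD Ideal.span {X ^ (d + 1)}] := by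
  refine SModEq.of_mul_eq_one (one_sub_X_pow_mul_inv hc) ?_
  simp_rw [pow_mul, mul_neg_geom_sum, ← pow_mul]
  simpa using (SModEq.refl (1 : K⟦X⟧)).sub (X_pow_smodEq_zero (Nat.le_mul_of_pos_left (d + 1) hc))

end Field

end PowerSeries

theorem dFac_smodEq_one {d e : ℕ} (h : d < e) (k : ℤ) :
    dFac e k ≡ 1 [SMOD Ideal.span {(X : ℚ⟦X⟧) ^ (d + 1)}] := by
  unfold dFac
  split_ifs
  · simpa using (inv_one_sub_X_pow_smodEq_one (K := ℚ) h).pow k.toNat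
  · simpa using ((SModEq.refl (1 : ℚ⟦X⟧)).sub (X_pow_smodEq_zero h)).pow (-k).toNat

theorem mem_strictTuples {a N : ℕ} {f : Fin a → ℕ} :
    f ∈ strictTuples a N ↔ StrictMono f ∧ ∀ j, 1 ≤ f j ∧ f j ≤ N := by
  simp [strictTuples, and_comm]

/-- `ofGaps e j = ∑_{t ≥ a - 1 - j} (e t + 1)`: the gaps are listed from the top, so that `e t`
raises exactly the `t + 1` largest entries. -/
def ofGaps : {a : ℕ} → (Fin a → ℕ) → Fin a → ℕ
  | 0, _ => Fin.elim0
  | _ + 1, e => Fin.cons (e (Fin.last _) + 1) fun j => e (Fin.last _) + 1 + ofGaps (Fin.init e) j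

def gaps : {a : ℕ} → (Fin a → ℕ) → Fin a → ℕ
  | 0, _ => Fin.elim0
  | _ + 1, f => Fin.snoc (gaps fun j => f j.succ - f 0) (f 0 - 1)

def gapWeight {a : ℕ} (e : Fin a → ℕ) : ℕ :=
  ∑ t : Fin a, ((t : ℕ) + 1) * e t

theorem gaps_ofGaps : ∀ {a : ℕ} (e : Fin a → ℕ), gaps (ofGaps e) = e
  | 0, _ => Subsingleton.elim _ _
  | _ + 1, e => by simp [gaps, ofGaps, gaps_ofGaps, Fin.snoc_init_self]

theorem ofGaps_gaps : ∀ {a : ℕ} {f : Fin a → ℕ}, StrictMono f → (∀ j, 0 < f j) →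
    ofGaps (gaps f) = f
  | 0, _, _, _ => Subsingleton.elim _ _
  | n + 1, f, hf, hpos => by
    have hsucc (j : Fin n) : f 0 < f j.succ := hf (Fin.succ_pos j)
    have htail : ofGaps (gaps fun j : Fin n => f j.succ - f 0) = fun j => f j.succ - f 0 := by
      refine ofGaps_gaps (fun i j hij => ?_) fun j => by have := hsucc j; omega
      have := hf (Fin.succ_lt_succ_iff.2 hij)
      have := hsucc i
      omega
    have h0 := hpos 0
    ext j
    induction j using Fin.cases with
    | zero =>
      simp only [ofGaps, gaps, Fin.snoc_last, Fin.init_snoc, Fin.cons_zero]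
      omega
    | succ j =>
      simp only [ofGaps, gaps, Fin.snoc_last, Fin.init_snoc, htail, Fin.cons_succ]
      have := hsucc j
      omega

theorem ofGaps_pos : ∀ {a : ℕ} (e : Fin a → ℕ) (j : Fin a), 0 < ofGaps e j
  | 0, _, j => j.elim0
  | _ + 1, e, j => by refine Fin.cases ?_ (fun j => ?_) j <;> simp [ofGaps]

theorem strictMono_ofGaps : ∀ {a : ℕ} (e : Fin a → ℕ), StrictMono (ofGaps e)
  | 0, _ => fun i => i.elim0
  | _ + 1, e => by
    intro i j hij
    induction j using Fin.cases with
    | zero => exact absurd hij (Fin.not_lt_zero i)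
    | succ j =>
      induction i using Fin.cases with
      | zero => simp [ofGaps, ofGaps_pos]
      | succ i => simpa [ofGaps] using strictMono_ofGaps (Fin.init e) (Fin.succ_lt_succ_iff.1 hij)

theorem gapWeight_eq_gapWeight_init_add {n : ℕ} (e : Fin (n + 1) → ℕ) :
    gapWeight e = gapWeight (Fin.init e) + (n + 1) * e (Fin.last n) := by
  simp [gapWeight, Fin.sum_univ_castSucc, Fin.init]

theorem sum_ofGaps : ∀ {a : ℕ} (e : Fin a → ℕ),
    ∑ j, ofGaps e j = ∑ j : Fin a, ((j : ℕ) + 1) + gapWeight e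
  | 0, _ => by simp [gapWeight]
  | n + 1, e => by
    rw [Fin.sum_univ_succ, Fin.sum_univ_castSucc, gapWeight_eq_gapWeight_init_add]
    simp only [ofGaps, Fin.cons_zero, Fin.cons_succ, sum_add_distrib, sum_ofGaps (Fin.init e),
      sum_const, card_univ, Fintype.card_fin, smul_eq_mul, Fin.val_castSucc, Fin.val_last]
    ring

theorem le_gapWeight {a : ℕ} (e : Fin a → ℕ) (t : Fin a) : e t ≤ gapWeight e :=
  calc e t ≤ ((t : ℕ) + 1) * e t := Nat.le_mul_of_pos_left _ t.val.succ_pos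
    _ ≤ gapWeight e := single_le_sum (f := fun t : Fin a => ((t : ℕ) + 1) * e t)
        (fun _ _ => Nat.zero_le _) (mem_univ t)

/-- A gap below one of the `d` smallest entries costs more than `a - d`. -/
theorem Icc_subset_image_ofGaps : ∀ {a d : ℕ} (e : Fin a → ℕ), d + gapWeight e ≤ a →
    Icc 1 d ⊆ univ.image (ofGaps e)
  | 0, d, _, h => by simp_all
  | _, 0, _, _ => by simp
  | n + 1, d + 1, e, h => by
    rw [gapWeight_eq_gapWeight_init_add] at h
    have hlast : e (Fin.last n) = 0 := by
      by_contra hne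
      have : n + 1 ≤ (n + 1) * e (Fin.last n) := Nat.le_mul_of_pos_right _ (Nat.pos_of_ne_zero hne)
      omega
    have ih := Icc_subset_image_ofGaps (d := d) (Fin.init e) (by omega)
    intro x hx
    rw [mem_Icc] at hx
    simp only [mem_image, mem_univ, true_and]
    rcases Nat.lt_or_ge 1 x with hx1 | hx1
    · obtain ⟨j, -, hj⟩ := mem_image.1 (ih (mem_Icc.2 ⟨by omega, by omega⟩ : x - 1 ∈ _))
      refine ⟨j.succ, ?_⟩
      simp only [ofGaps, hlast, zero_add, Fin.cons_succ, hj]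
      omega
    · refine ⟨0, ?_⟩
      simp only [ofGaps, hlast, zero_add, Fin.cons_zero]
      omega

theorem sum_piFinset_pow_gapWeight {R : Type*} [CommSemiring R] {a : ℕ} (x : R) (s : Finset ℕ) :
    ∑ e ∈ Fintype.piFinset fun _ : Fin a => s, x ^ gapWeight e =
      ∏ t : Fin a, ∑ i ∈ s, x ^ (((t : ℕ) + 1) * i) := by
  rw [prod_univ_sum]
  exact sum_congr rfl fun e _ => (prod_pow_eq_pow_sum _ _ _).symm

theorem prod_ofGaps_smodEq {R : Type*} [CommRing R] {I : Ideal R} {a d : ℕ} {e : Fin a → ℕ}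
    (h : d + gapWeight e ≤ a) {F : ℕ → R} (hF : ∀ n, d < n → F n ≡ 1 [SMOD I]) :
    ∏ j, F (ofGaps e j) ≡ ∏ n ∈ Icc 1 d, F n [SMOD I] := by
  rw [← prod_image (strictMono_ofGaps e).injective.injOn]
  refine prod_smodEq_prod_of_subset (Icc_subset_image_ofGaps e h) fun n hn => hF n ?_
  obtain ⟨himage, hnd⟩ := mem_sdiff.1 hn
  obtain ⟨j, -, rfl⟩ := mem_image.1 himage
  simp only [mem_Icc, not_and, not_le] at hnd
  exact hnd (ofGaps_pos e j)

theorem coeff_X_pow_sum_ofGaps_mul_prod_dFac {a r m : ℕ} (hr : 0 < r) (hm : m ≤ a)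
    (e : Fin a → ℕ) (k : ℤ) :
    coeff (m + r * (a * (a + 1) / 2)) (X ^ (r * ∑ j, ofGaps e j) * ∏ j, dFac (ofGaps e j) k) =
      coeff m (X ^ (r * gapWeight e) * ∏ n ∈ Icc 1 m, dFac n k) := by
  rw [sum_ofGaps, Fin.sum_univ_val_add_one, mul_add r, pow_add, mul_assoc, coeff_X_pow_mul]
  by_cases hwm : r * gapWeight e ≤ m
  swap
  · rw [coeff_X_pow_mul', coeff_X_pow_mul', if_neg hwm, if_neg hwm]
  obtain ⟨d, rfl⟩ := Nat.exists_eq_add_of_le hwm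
  have hw : gapWeight e ≤ r * gapWeight e := Nat.le_mul_of_pos_left _ hr
  have hprod : ∏ j, dFac (ofGaps e j) k ≡ ∏ n ∈ Icc 1 (r * gapWeight e + d), dFac n k
      [SMOD Ideal.span {(X : ℚ⟦X⟧) ^ (d + 1)}] :=
    (prod_ofGaps_smodEq (by omega) fun n hn => dFac_smodEq_one hn k).trans
      (prod_smodEq_prod_of_subset (Icc_subset_Icc_right (by omega)) fun n hn => by
        simp only [mem_sdiff, mem_Icc, not_and, not_le] at hn
        exact dFac_smodEq_one (by omega) k).symm
  exact smodEq_X_pow_iff.1 (X_pow_mul_smodEq hprod _) _ (by omega)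

theorem sum_strictTuples_X_pow_gapWeight_smodEq {K : Type*} [Field K] {a r m N : ℕ} (hr : 0 < r)
    (hN : m + a * (a + 1) / 2 ≤ N) :
    ∑ f ∈ strictTuples a N, (X : K⟦X⟧) ^ (r * gapWeight (gaps f)) ≡
      ∏ n ∈ Icc 1 a, (1 - X ^ (r * n))⁻¹ [SMOD Ideal.span {X ^ (m + 1)}] := by
  have hinj : Set.InjOn (gaps (a := a)) (strictTuples a N : Set (Fin a → ℕ)) := by
    intro f hf g hg hfg
    rw [mem_coe, mem_strictTuples] at hf hg
    rw [← ofGaps_gaps hf.1 (fun j => (hf.2 j).1), hfg, ofGaps_gaps hg.1 fun j => (hg.2 j).1]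
  have hfilter : {e ∈ (strictTuples a N).image gaps | r * gapWeight e ≤ m} =
      {e ∈ Fintype.piFinset fun _ : Fin a => range (m + 1) | r * gapWeight e ≤ m} := by
    ext e
    simp only [mem_filter, mem_image, Fintype.mem_piFinset, mem_range, and_congr_left_iff]
    intro hwm
    have hw : gapWeight e ≤ r * gapWeight e := Nat.le_mul_of_pos_left _ hr
    constructor
    · rintro - t
      have := le_gapWeight e t
      omega
    · intro _
      refine ⟨ofGaps e, mem_strictTuples.2 ⟨strictMono_ofGaps e, fun j => ⟨ofGaps_pos e j, ?_⟩⟩,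
        gaps_ofGaps e⟩
      have hsum := sum_ofGaps e
      rw [Fin.sum_univ_val_add_one] at hsum
      have := single_le_sum (fun i _ => Nat.zero_le (ofGaps e i)) (mem_univ j)
      omega
  have hsmall : ∀ e : Fin a → ℕ, ¬ r * gapWeight e ≤ m →
      (X : K⟦X⟧) ^ (r * gapWeight e) ≡ 0 [SMOD Ideal.span {X ^ (m + 1)}] :=
    fun e he => X_pow_smodEq_zero (by omega)
  rw [← sum_image (f := fun e => (X : K⟦X⟧) ^ (r * gapWeight e)) hinj]
  calc ∑ e ∈ (strictTuples a N).image gaps, (X : K⟦X⟧) ^ (r * gapWeight e)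
      ≡ ∑ e ∈ (strictTuples a N).image gaps with r * gapWeight e ≤ m, X ^ (r * gapWeight e)
        [SMOD Ideal.span {X ^ (m + 1)}] := sum_smodEq_sum_filter _ fun e _ => hsmall e
    _ = ∑ e ∈ Fintype.piFinset (fun _ : Fin a => range (m + 1)) with r * gapWeight e ≤ m,
          X ^ (r * gapWeight e) := by rw [hfilter]
    _ ≡ ∑ e ∈ Fintype.piFinset (fun _ : Fin a => range (m + 1)), X ^ (r * gapWeight e)
        [SMOD Ideal.span {X ^ (m + 1)}] := (sum_smodEq_sum_filter _ fun e _ => hsmall e).symm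
    _ = ∏ t : Fin a, ∑ i ∈ range (m + 1), X ^ (r * ((t : ℕ) + 1) * i) := by
      simp_rw [pow_mul X r, sum_piFinset_pow_gapWeight, ← pow_mul, mul_assoc]
    _ ≡ ∏ t : Fin a, (1 - X ^ (r * ((t : ℕ) + 1)))⁻¹ [SMOD Ideal.span {X ^ (m + 1)}] :=
      SModEq.prod fun t _ => geom_sum_X_pow_smodEq_inv (by positivity) m
    _ = ∏ n ∈ Icc 1 a, (1 - X ^ (r * n))⁻¹ :=
      Fin.prod_univ_val_add_one a fun n => (1 - X ^ (r * n))⁻¹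

theorem A_approximates_eta_quotient_general (a r : ℕ) (hr : 1 ≤ r) (k : ℤ)
    (m : ℕ) (hm : m ≤ a) :
    Acoeff a k r (m + r * (a * (a + 1) / 2)) =
      PowerSeries.coeff (R := ℚ) m
        (∏ n ∈ Finset.Icc 1 m, ((1 - (X : PowerSeries ℚ) ^ (r * n))⁻¹ * dFac n k)) := by
  have hterm : ∀ f ∈ strictTuples a (m + r * (a * (a + 1) / 2)),
      coeff (m + r * (a * (a + 1) / 2)) (X ^ (r * ∑ j, f j) * ∏ j, dFac (f j) k) =
        coeff m (X ^ (r * gapWeight (gaps f)) * ∏ n ∈ Icc 1 m, dFac n k) := fun f hf => by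
    obtain ⟨hmono, hbounds⟩ := mem_strictTuples.1 hf
    conv_lhs => rw [← ofGaps_gaps hmono fun j => (hbounds j).1]
    exact coeff_X_pow_sum_ofGaps_mul_prod_dFac hr hm _ k
  have hgen := sum_strictTuples_X_pow_gapWeight_smodEq (K := ℚ) (m := m) hr
    (Nat.add_le_add_left (Nat.le_mul_of_pos_left (a * (a + 1) / 2) hr) m)
  have htrunc : ∏ n ∈ Icc 1 a, (1 - (X : ℚ⟦X⟧) ^ (r * n))⁻¹ ≡ ∏ n ∈ Icc 1 m, (1 - X ^ (r * n))⁻¹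
      [SMOD Ideal.span {X ^ (m + 1)}] :=
    prod_smodEq_prod_of_subset (Icc_subset_Icc_right hm) fun n hn => by
      simp only [mem_sdiff, mem_Icc, not_and, not_le] at hn
      exact inv_one_sub_X_pow_smodEq_one (by have := Nat.le_mul_of_pos_left n hr; omega)
  rw [Acoeff, sum_congr rfl hterm, ← map_sum, ← sum_mul, prod_mul_distrib]
  exact smodEq_X_pow_iff.1 ((hgen.trans htrunc).mul (SModEq.refl _)) m (lt_add_one m)

/-- Theorem 1.2 (1), first part.  For `a, r ∈ ℕ` (positive) and `k ∈ ℤ`,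
`q^{-ra(a+1)/2} 𝒜_{a,k,r}(q) = ∏_{n≥1} 1/((1-q^{rn})(1-q^n)^k) + O(q^{a+1})`:
for every `0 ≤ m ≤ a`, the coefficient `c_{a,k,r}(m + ra(a+1)/2)` equals the coefficient of
`q^m` in `∏_{n≥1} (1-q^{rn})⁻¹ (1-q^n)^{-k}` (factors with `n > m` do not affect this
coefficient, so the infinite product may be truncated at `n = m`). -/
theorem A_approximates_eta_quotient (a r : ℕ) (ha : 1 ≤ a) (hr : 1 ≤ r) (k : ℤ)
    (m : ℕ) (hm : m ≤ a) :
    Acoeff a k r (m + r * (a * (a + 1) / 2)) =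
      PowerSeries.coeff (R := ℚ) m
        (∏ n ∈ Finset.Icc 1 m, ((1 - (X : PowerSeries ℚ) ^ (r * n))⁻¹ * dFac n k)) :=
  A_approximates_eta_quotient_general a r hr k m hm
end
end

section
/- For every a ∈ ℕ there exist polynomials P_{a,ℓ,n} ∈ ℚ[x], indexed by integers ℓ ≥ 0 and n ≥ a(a+1)/2, each of degree at most ℓ, such that for all k ∈ ℤ, r ∈ ℕ and N ∈ ℕ₀, c_{a,k,r}(N) = Σ P_{a,ℓ,n}(k), the sum running over all pairs (ℓ, n) with ℓ ≥ 0, n ≥ a(a+1)/2 and nr + ℓ = N. Explicitly, one may take P_{a,ℓ,n}(k) = Σ ∏_{j=1}^a C(m_j + k − 2, m_j − 1), where the sum runs over all 1 ≤ n₁ < n₂ < ⋯ < n_a and m₁, …, m_a ≥ 1 with n₁+⋯+n_a = n and m₁n₁+⋯+m_an_a = n + ℓ, and C(m+k−2, m−1) denotes the polynomial (k)(k+1)⋯(k+m−2)/(m−1)! in k. -/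
open PowerSeries Finset
open scoped Classical

noncomputable section

/-- The explicit polynomial `P_{a,ℓ,n}(k) = Σ ∏_{j=1}^a C(m_j + k - 2, m_j - 1)`, the sum over
all `1 ≤ n₁ < ⋯ < n_a` and `m₁, …, m_a ≥ 1` with `n₁+⋯+n_a = n` and `m₁n₁+⋯+m_an_a = n + ℓ`,
where `C(m+k-2, m-1) = k(k+1)⋯(k+m-2)/(m-1)!` is the ascending Pochhammer polynomial in `k`
divided by `(m-1)!`.  (All such `n_j, m_j` lie in `[1, n+ℓ]`.) -/
def Ppoly (a ℓ n : ℕ) : Polynomial ℚ :=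
  ∑ p ∈ ((Fintype.piFinset fun _ : Fin a => Finset.Icc 1 (n + ℓ)) ×ˢ
          (Fintype.piFinset fun _ : Fin a => Finset.Icc 1 (n + ℓ))).filter
      (fun p => StrictMono p.1 ∧ (∑ j, p.1 j) = n ∧ (∑ j, p.1 j * p.2 j) = n + ℓ),
    ∏ j, (((p.2 j - 1).factorial : ℚ)⁻¹ • ascPochhammer ℚ (p.2 j - 1))

/-! For every integer `k`, `(1 - q^n)^{-k} = ∑_{m ≥ 0} C(k+m-1, m) q^{nm}`, where
`C(k+m-1, m) = k(k+1)⋯(k+m-1)/m!` is a polynomial of degree `m` in `k`: this is the binomial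
series `(1 + X)^{-k}` with `X` replaced by `-X^n`. Multiplying out the `a` factors, the coefficient
of `q^N` in the term of `(n₁, …, n_a)` collects the exponents `m_j ≥ 1` with
`r ∑ n_j + ∑ n_j (m_j - 1) = N`, each contributing `∏ C(m_j + k - 2, m_j - 1)`. Grouping these
by `n = ∑ n_j` and `ℓ = ∑ n_j (m_j - 1)` gives exactly `P_{a,ℓ,n}(k)`. Its degree is at most
`∑ (m_j - 1) ≤ ℓ`, and `n ≥ 1 + 2 + ⋯ + a` because the `n_j` are distinct. -/

def multichoosePoly (m : ℕ) : Polynomial ℚ := (m.factorial : ℚ)⁻¹ • ascPochhammer ℚ m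

theorem multichoosePoly_eval (m : ℕ) (x : ℚ) :
    (multichoosePoly m).eval x = Ring.multichoose x m := by
  have h := Ring.factorial_nsmul_multichoose_eq_ascPochhammer x m
  rw [Polynomial.ascPochhammer_smeval_eq_eval, nsmul_eq_mul] at h
  rw [multichoosePoly, Polynomial.eval_smul, smul_eq_mul, ← h, inv_mul_cancel_left₀]
  exact_mod_cast m.factorial_ne_zero

theorem multichoosePoly_natDegree_le (m : ℕ) : (multichoosePoly m).natDegree ≤ m :=
  (Polynomial.natDegree_smul_le _ _).trans (ascPochhammer_natDegree ℚ m).le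

theorem coeff_rescale_neg_one_binomialSeries_neg (r : ℚ) (m : ℕ) :
    coeff m (rescale (-1) (binomialSeries ℚ (-r))) = Ring.multichoose r m := by
  rw [coeff_rescale, binomialSeries_coeff, Ring.choose_neg', smul_eq_mul, mul_one,
    Units.smul_def, Int.coe_negOnePow_natCast, zsmul_eq_mul]
  push_cast
  rw [← mul_assoc, ← mul_pow, neg_one_mul, neg_neg, one_pow, one_mul]

theorem dFac_eq_expand_binomialSeries {n : ℕ} (hn : n ≠ 0) (k : ℤ) :
    dFac n k = expand n hn (rescale (-1) (binomialSeries ℚ (-(k : ℚ)))) := by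
  set φ : PowerSeries ℚ →+* PowerSeries ℚ := (expand n hn).toRingHom.comp (rescale (-1))
  have hφ : ∀ d : ℕ, φ (binomialSeries ℚ (d : ℚ)) = (1 - X ^ n) ^ d := fun d => by
    simp [φ, binomialSeries_nat, rescale_X, sub_eq_add_neg]
  have hunit : constantCoeff (1 - X ^ n : PowerSeries ℚ) ≠ 0 := by simp [hn]
  change dFac n k = φ _
  obtain ⟨d, rfl | rfl⟩ := Int.eq_nat_or_neg k
  · -- both sides are inverse to `(1 - X^n)^d`
    rw [dFac, if_pos (Int.natCast_nonneg d), Int.toNat_natCast]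
    refine mul_right_cancel₀ (pow_ne_zero d (ne_zero_of_map hunit)) ?_
    rw [← mul_pow, PowerSeries.inv_mul_cancel _ hunit, one_pow, ← hφ, ← map_mul,
      ← binomialSeries_add, Int.cast_natCast, neg_add_cancel, binomialSeries_zero, map_one]
  · rcases d.eq_zero_or_pos with rfl | hd
    · simp [dFac]
    rw [dFac, if_neg (by omega), neg_neg, Int.toNat_natCast, ← hφ, Int.cast_neg, neg_neg,
      Int.cast_natCast]

theorem coeff_dFac {n : ℕ} (hn : n ≠ 0) (k : ℤ) (M : ℕ) :
    coeff M (dFac n k) = if n ∣ M then Ring.multichoose (k : ℚ) (M / n) else 0 := by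
  rw [dFac_eq_expand_binomialSeries hn, coeff_expand]
  split_ifs <;> simp only [coeff_rescale_neg_one_binomialSeries_neg]

theorem coeff_eq_of_sModEq_X_pow {R : Type*} [CommRing R] {N : ℕ} {φ ψ : PowerSeries R}
    (h : φ ≡ ψ [SMOD Ideal.span {(X : PowerSeries R) ^ (N + 1)}]) : coeff N φ = coeff N ψ := by
  rw [SModEq.sub_mem, Ideal.mem_span_singleton, X_pow_dvd_iff] at h
  simpa [sub_eq_zero] using h N (lt_add_one N)

theorem dFac_sModEq_sum {n : ℕ} (hn : n ≠ 0) (k : ℤ) (B : ℕ) :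
    dFac n k ≡ ∑ i ∈ Icc 1 B, C (Ring.multichoose (k : ℚ) (i - 1)) * X ^ (n * (i - 1))
      [SMOD Ideal.span {(X : PowerSeries ℚ) ^ B}] := by
  rw [SModEq.sub_mem, Ideal.mem_span_singleton, X_pow_dvd_iff]
  intro m hm
  rw [map_sub, map_sum, coeff_dFac hn, sub_eq_zero]
  simp_rw [coeff_C_mul_X_pow]
  rw [Finset.sum_eq_single (m / n + 1), Nat.add_sub_cancel]
  · simp only [eq_comm (a := m), Nat.mul_div_eq_iff_dvd]
  · intro i hi hne
    rw [if_neg]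
    rintro rfl
    rw [Nat.mul_div_cancel_left _ (Nat.pos_of_ne_zero hn)] at hne
    have := (mem_Icc.mp hi).1
    omega
  · intro hi
    exact absurd (mem_Icc.mpr ⟨Nat.le_add_left _ _, by have := Nat.div_le_self m n; omega⟩) hi

theorem coeff_X_pow_mul_prod_dFac {a : ℕ} (f : Fin a → ℕ) (hf : ∀ j, f j ≠ 0) (k : ℤ)
    (s N : ℕ) :
    coeff N ((X : PowerSeries ℚ) ^ s * ∏ j, dFac (f j) k) =
      ∑ m ∈ Fintype.piFinset fun _ : Fin a => Icc 1 (N + 1),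
        if s + ∑ j, f j * (m j - 1) = N then ∏ j, Ring.multichoose (k : ℚ) (m j - 1) else 0 := by
  rw [coeff_eq_of_sModEq_X_pow (R := ℚ) (SModEq.mul SModEq.rfl
      (SModEq.prod fun j _ => dFac_sModEq_sum (hf j) k (N + 1))),
    Finset.prod_univ_sum, Finset.mul_sum, map_sum]
  refine Finset.sum_congr rfl fun m _ => ?_
  rw [Finset.prod_mul_distrib, ← map_prod, Finset.prod_pow_eq_pow_sum, mul_left_comm, ← pow_add,
    coeff_C_mul_X_pow]
  simp only [eq_comm (a := N)]

theorem Acoeff_eq_sum (a : ℕ) (k : ℤ) (r N : ℕ) :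
    Acoeff a k r N = ∑ f ∈ strictTuples a N, ∑ m ∈ Fintype.piFinset fun _ : Fin a => Icc 1 (N + 1),
      if r * ∑ j, f j + ∑ j, f j * (m j - 1) = N then ∏ j, Ring.multichoose (k : ℚ) (m j - 1)
      else 0 := by
  refine Finset.sum_congr rfl fun f hf => coeff_X_pow_mul_prod_dFac f (fun j => ?_) k _ N
  simp only [strictTuples, mem_filter, Fintype.mem_piFinset, mem_Icc] at hf
  exact Nat.one_le_iff_ne_zero.mp (hf.1 j).1

theorem val_add_one_le_of_strictMono {a : ℕ} {f : Fin a → ℕ} (hf : StrictMono f)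
    (hpos : ∀ j, 1 ≤ f j) (i : Fin a) : (i : ℕ) + 1 ≤ f i := by
  obtain ⟨i, hi⟩ := i
  induction i with
  | zero => exact hpos _
  | succ i ih =>
    have := hf (show (⟨i, by omega⟩ : Fin a) < ⟨i + 1, hi⟩ from Fin.mk_lt_mk.mpr (by omega))
    have := ih (by omega)
    simp only at this ⊢
    omega

theorem triangle_le_sum_of_strictMono {a : ℕ} {f : Fin a → ℕ} (hf : StrictMono f)
    (hpos : ∀ j, 1 ≤ f j) : a * (a + 1) / 2 ≤ ∑ j, f j := by
  have hgauss : ∑ j : Fin a, ((j : ℕ) + 1) = a * (a + 1) / 2 := by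
    rw [Fin.sum_univ_eq_sum_range (fun i => i + 1), ← add_zero (∑ i ∈ range a, (i + 1)),
      ← Finset.sum_range_succ' (fun i => i), Finset.sum_range_id, Nat.add_sub_cancel, mul_comm]
  exact hgauss ▸ Finset.sum_le_sum fun j _ => val_add_one_le_of_strictMono hf hpos j

theorem sum_mul_sub_one_add_sum {ι : Type*} [Fintype ι] (f m : ι → ℕ) (hm : ∀ j, 1 ≤ m j) :
    ∑ j, f j * (m j - 1) + ∑ j, f j = ∑ j, f j * m j := by
  rw [← Finset.sum_add_distrib]
  refine Finset.sum_congr rfl fun j _ => ?_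
  obtain ⟨m', hm'⟩ := Nat.exists_eq_add_of_le' (hm j)
  rw [hm', Nat.add_sub_cancel]
  ring

theorem le_sum_mul_of_one_le {ι : Type*} [Fintype ι] {f : ι → ℕ} (m : ι → ℕ) {j : ι}
    (hf : 1 ≤ f j) : m j ≤ ∑ i, f i * m i :=
  (Nat.le_mul_of_pos_left _ hf).trans
    (Finset.single_le_sum (f := fun i => f i * m i) (fun _ _ => Nat.zero_le _) (mem_univ j))

theorem Ppoly_eq_sum_filter {a ℓ n B₁ B₂ : ℕ} (h₁ : n ≤ B₁) (h₂ : n + ℓ ≤ B₂) :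
    Ppoly a ℓ n = ∑ p ∈ ((Fintype.piFinset fun _ : Fin a => Icc 1 B₁) ×ˢ
        (Fintype.piFinset fun _ : Fin a => Icc 1 B₂)).filter
        (fun p => StrictMono p.1 ∧ ∑ j, p.1 j = n ∧ ∑ j, p.1 j * p.2 j = n + ℓ),
      ∏ j, multichoosePoly (p.2 j - 1) := by
  refine Finset.sum_congr (Finset.ext fun p => ?_) fun _ _ => rfl
  simp only [mem_filter, mem_product, Fintype.mem_piFinset, mem_Icc]
  constructor <;> rintro ⟨⟨hf, hm⟩, hmono, hsum, hwsum⟩ <;>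
    refine ⟨⟨fun j => ⟨(hf j).1, ?_⟩, fun j => ⟨(hm j).1, ?_⟩⟩, hmono, hsum, hwsum⟩ <;>
    have := Finset.single_le_sum (fun i _ => Nat.zero_le (p.1 i)) (mem_univ j) <;>
    have := le_sum_mul_of_one_le p.2 (hf j).1 <;>
    omega

theorem Ppoly_degree_le (a ℓ n : ℕ) : (Ppoly a ℓ n).degree ≤ ℓ := by
  rw [Ppoly_eq_sum_filter (Nat.le_add_right n ℓ) le_rfl]
  refine Polynomial.degree_le_of_natDegree_le
    (Polynomial.natDegree_sum_le_of_forall_le _ _ fun p hp => ?_)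
  simp only [mem_filter, mem_product, Fintype.mem_piFinset, mem_Icc] at hp
  obtain ⟨⟨hf, hm⟩, -, hsum, hwsum⟩ := hp
  have hsplit := sum_mul_sub_one_add_sum p.1 p.2 fun j => (hm j).1
  calc (∏ j, multichoosePoly (p.2 j - 1)).natDegree
      ≤ ∑ j, (multichoosePoly (p.2 j - 1)).natDegree := Polynomial.natDegree_prod_le _ _
    _ ≤ ∑ j, p.1 j * (p.2 j - 1) := Finset.sum_le_sum fun j _ =>
        (multichoosePoly_natDegree_le _).trans (Nat.le_mul_of_pos_left _ (hf j).1)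
    _ = ℓ := by omega
theorem sum_ite_shape_eq_ite {M : Type*} [AddCommMonoid M] {a r N : ℕ} (hr : 1 ≤ r)
    {f m : Fin a → ℕ} (hmono : StrictMono f) (hf : ∀ j, 1 ≤ f j) (hm : ∀ j, 1 ≤ m j) (c : M) :
    ∑ p ∈ (range (N + 1) ×ˢ range (N + 1)).filter
        (fun p => a * (a + 1) / 2 ≤ p.2 ∧ p.2 * r + p.1 = N),
      (if StrictMono f ∧ ∑ j, f j = p.2 ∧ ∑ j, f j * m j = p.2 + p.1 then c else 0) =
      if r * ∑ j, f j + ∑ j, f j * (m j - 1) = N then c else 0 := by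
  have hsplit := sum_mul_sub_one_add_sum f m hm
  have hfiber : ∀ p : ℕ × ℕ, (StrictMono f ∧ ∑ j, f j = p.2 ∧ ∑ j, f j * m j = p.2 + p.1) ↔
      (∑ j, f j * m j - ∑ j, f j, ∑ j, f j) = p := by
    rintro ⟨ℓ, n⟩
    simp only [Prod.mk.injEq, hmono, true_and]
    omega
  simp only [hfiber, sum_ite_eq]
  have htri := triangle_le_sum_of_strictMono hmono hf
  have : ∑ j, f j ≤ (∑ j, f j) * r := Nat.le_mul_of_pos_right _ hr
  congr 1
  simp only [mem_filter, mem_product, mem_range, eq_iff_iff]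
  rw [mul_comm r]
  omega

theorem sum_Ppoly_eval_eq_sum {a r : ℕ} (hr : 1 ≤ r) (x : ℚ) (N : ℕ) :
    ∑ p ∈ (range (N + 1) ×ˢ range (N + 1)).filter
        (fun p => a * (a + 1) / 2 ≤ p.2 ∧ p.2 * r + p.1 = N), (Ppoly a p.1 p.2).eval x =
      ∑ f ∈ strictTuples a N, ∑ m ∈ Fintype.piFinset fun _ : Fin a => Icc 1 (N + 1),
        if r * ∑ j, f j + ∑ j, f j * (m j - 1) = N then ∏ j, Ring.multichoose x (m j - 1)
        else 0 := by
  have hbox : ∀ p ∈ (range (N + 1) ×ˢ range (N + 1)).filter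
      (fun p : ℕ × ℕ => a * (a + 1) / 2 ≤ p.2 ∧ p.2 * r + p.1 = N), (Ppoly a p.1 p.2).eval x =
      ∑ f ∈ Fintype.piFinset (fun _ : Fin a => Icc 1 N),
        ∑ m ∈ Fintype.piFinset fun _ : Fin a => Icc 1 (N + 1),
          if StrictMono f ∧ ∑ j, f j = p.2 ∧ ∑ j, f j * m j = p.2 + p.1 then
            ∏ j, Ring.multichoose x (m j - 1) else 0 := by
    intro p hp
    have hpN : p.2 * r + p.1 = N := (mem_filter.mp hp).2.2
    have : p.2 ≤ p.2 * r := Nat.le_mul_of_pos_right _ hr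
    rw [Ppoly_eq_sum_filter (B₁ := N) (B₂ := N + 1) (by omega) (by omega),
      Polynomial.eval_finsetSum, sum_filter, sum_product]
    simp only [Polynomial.eval_prod, multichoosePoly_eval]
  rw [sum_congr rfl hbox, sum_comm, strictTuples, sum_filter]
  refine sum_congr rfl fun f hf => ?_
  rw [sum_comm]
  split_ifs with hmono
  · refine sum_congr rfl fun m hm => ?_
    simp only [Fintype.mem_piFinset, mem_Icc] at hf hm
    exact sum_ite_shape_eq_ite hr hmono (fun j => (hf j).1) (fun j => (hm j).1) _
  · exact sum_eq_zero fun m _ => sum_eq_zero fun p _ => if_neg fun h => hmono h.1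

theorem A_coeff_polynomial_family_general (a : ℕ) :
    (∀ ℓ n : ℕ, (Ppoly a ℓ n).degree ≤ (ℓ : ℕ)) ∧
    ∀ (k : ℤ) (r : ℕ), 1 ≤ r → ∀ N : ℕ,
      Acoeff a k r N =
        ∑ p ∈ (Finset.range (N + 1) ×ˢ Finset.range (N + 1)).filter
            (fun p => a * (a + 1) / 2 ≤ p.2 ∧ p.2 * r + p.1 = N),
          (Ppoly a p.1 p.2).eval (k : ℚ) :=
  ⟨Ppoly_degree_le a, fun k _ hr N => by rw [Acoeff_eq_sum, sum_Ppoly_eval_eq_sum hr]⟩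

/-- Theorem 1.3, `𝒜`-part, with explicit polynomials.  For `a ∈ ℕ`
(positive) there are polynomials `P_{a,ℓ,n}` of degree at most `ℓ` such that for every
`k ∈ ℤ`, `r ∈ ℕ` (positive) and `N ∈ ℕ₀` one has
`c_{a,k,r}(N) = Σ_{(ℓ,n) : ℓ ≥ 0, n ≥ a(a+1)/2, nr+ℓ = N} P_{a,ℓ,n}(k)`;
one may take the explicit polynomials `Ppoly`. -/
theorem A_coeff_polynomial_family (a : ℕ) (ha : 1 ≤ a) :
    (∀ ℓ n : ℕ, (Ppoly a ℓ n).degree ≤ (ℓ : ℕ)) ∧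
    ∀ (k : ℤ) (r : ℕ), 1 ≤ r → ∀ N : ℕ,
      Acoeff a k r N =
        ∑ p ∈ (Finset.range (N + 1) ×ˢ Finset.range (N + 1)).filter
            (fun p => a * (a + 1) / 2 ≤ p.2 ∧ p.2 * r + p.1 = N),
          (Ppoly a p.1 p.2).eval (k : ℚ) :=
  A_coeff_polynomial_family_general a
end
end

section
/- Let g : ℝ → ℂ be a C^∞ function, c ∈ ℝ, n ∈ ℕ₀, and write ζ(z) := e^{2πiz}. Let D denote the operator sending a smooth function f to z ↦ ζ(z)^{−1} f′(z). Then: (1) D^n applied to z ↦ ζ(z)^c g(z) equals z ↦ ζ(z)^{c−n} Σ_{ℓ=0}^{n} (2πi)^{n−ℓ} α_c(n,ℓ) g^{(ℓ)}(z); and (2) the n-th derivative of z ↦ ζ(z)^c g(z) equals z ↦ Σ_{ℓ=0}^{n} (2πi)^{n−ℓ} β_c(n,ℓ) ζ(z)^{c+ℓ} (D^ℓ g)(z). -/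
open scoped Real

noncomputable section

/-- The generalized Stirling numbers `S_{n,ℓ}(a,b,c)` of Howard–Schmidt, defined by the
recurrence `S_{n+1,ℓ}(a,b,c) = (aℓ - bn + c) S_{n,ℓ}(a,b,c) + S_{n,ℓ-1}(a,b,c)` with
`S_{0,0}(a,b,c) = 1` and `S_{n,ℓ}(a,b,c) = 0` for `ℓ < 0` or `ℓ > n` (the stated recursion
automatically satisfies the vanishing conditions). -/
def genStirling (a b c : ℝ) : ℕ → ℤ → ℝ
  | 0, ℓ => if ℓ = 0 then 1 else 0
  | n + 1, ℓ => (a * ℓ - b * n + c) * genStirling a b c n ℓ + genStirling a b c n (ℓ - 1)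

/-- `α_c(n,ℓ) := S_{n,ℓ}(0,1,c)`. -/
def alphaSt (c : ℝ) (n : ℕ) (ℓ : ℤ) : ℝ := genStirling 0 1 c n ℓ

/-- `β_c(n,ℓ) := S_{n,ℓ}(1,0,c)`. -/
def betaSt (c : ℝ) (n : ℕ) (ℓ : ℤ) : ℝ := genStirling 1 0 c n ℓ

/-- `ζ(z)^c = e^{2πicz}` for `z ∈ ℝ`, `c ∈ ℝ`. -/
def zetaPow (c : ℝ) (z : ℝ) : ℂ := Complex.exp (2 * Real.pi * Complex.I * c * z)

/-- The operator `D : f ↦ (z ↦ ζ(z)⁻¹ f'(z))`. -/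
def Dop (f : ℝ → ℂ) : ℝ → ℂ := fun z => (zetaPow 1 z)⁻¹ * deriv f z

/-! Both formulas follow by induction on `n`. Applying `D` (resp. `d/dz`) once more to the
`n`-th formula turns the `ℓ`-th term `T ℓ` into `2πi (aℓ - bn + c) T ℓ + T (ℓ + 1)`, and the
Stirling recurrence regroups these into the `(n+1)`-st formula: for `D` take `a = 0`, `b = 1`,
`T ℓ = g^{(ℓ)}`; for `d/dz` take `a = 1`, `b = 0`, `T ℓ = ζ^{c+ℓ} D^ℓ g`, using
`ζ^a f' = ζ^{a+1} D f`. -/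

lemma zetaPow_ne_zero (c z : ℝ) : zetaPow c z ≠ 0 := Complex.exp_ne_zero _

lemma zetaPow_add (a b z : ℝ) : zetaPow (a + b) z = zetaPow a z * zetaPow b z := by
  rw [zetaPow, zetaPow, zetaPow, ← Complex.exp_add]
  congr 1
  push_cast
  ring

lemma hasDerivAt_zetaPow (c z : ℝ) :
    HasDerivAt (zetaPow c) (2 * π * Complex.I * c * zetaPow c z) z := by
  have h := (((hasDerivAt_id (z : ℂ)).const_mul (2 * π * Complex.I * c)).cexp).comp_ofReal
  simp only [id, mul_one] at h
  rw [mul_comm]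
  exact h

lemma contDiff_zetaPow (c : ℝ) : ContDiff ℝ (⊤ : ℕ∞) (zetaPow c) :=
  (contDiff_const.mul Complex.ofRealCLM.contDiff).cexp

lemma HasDerivAt.zetaPow_mul {f : ℝ → ℂ} {f' : ℂ} {z : ℝ} (hf : HasDerivAt f f' z) (a : ℝ) :
    HasDerivAt (fun y => zetaPow a y * f y)
      (zetaPow a z * (2 * π * Complex.I * a * f z + f')) z :=
  ((hasDerivAt_zetaPow a z).fun_mul hf).congr_deriv (by ring)

lemma zetaPow_succ_mul_Dop (f : ℝ → ℂ) (a z : ℝ) :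
    zetaPow (a + 1) z * Dop f z = zetaPow a z * deriv f z := by
  rw [Dop, zetaPow_add, mul_assoc, mul_inv_cancel_left₀ (zetaPow_ne_zero 1 z)]

lemma Dop_zetaPow_mul_apply {f : ℝ → ℂ} {f' : ℂ} {z : ℝ} (hf : HasDerivAt f f' z) (a : ℝ) :
    Dop (fun y => zetaPow a y * f y) z =
      zetaPow (a - 1) z * (2 * π * Complex.I * a * f z + f') := by
  have h := zetaPow_succ_mul_Dop (fun y => zetaPow a y * f y) (a - 1) z
  rw [sub_add_cancel, (hf.zetaPow_mul a).deriv] at h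
  rw [← mul_right_inj' (zetaPow_ne_zero a z), h, mul_left_comm]

lemma contDiff_Dop {f : ℝ → ℂ} (hf : ContDiff ℝ (⊤ : ℕ∞) f) : ContDiff ℝ (⊤ : ℕ∞) (Dop f) :=
  ((contDiff_zetaPow 1).inv (zetaPow_ne_zero 1)).mul (contDiff_infty_iff_deriv.mp hf).2

lemma contDiff_Dop_iterate {f : ℝ → ℂ} (hf : ContDiff ℝ (⊤ : ℕ∞) f) (n : ℕ) :
    ContDiff ℝ (⊤ : ℕ∞) (Dop^[n] f) := by
  induction n with
  | zero => exact hf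
  | succ n ih => rw [Function.iterate_succ_apply']; exact contDiff_Dop ih

section genStirling

variable (a b c : ℝ)

lemma genStirling_of_neg (n : ℕ) {ℓ : ℤ} (h : ℓ < 0) : genStirling a b c n ℓ = 0 := by
  induction n generalizing ℓ with
  | zero => simp [genStirling, h.ne]
  | succ n ih => rw [genStirling, ih h, ih (by omega), mul_zero, add_zero]

lemma genStirling_of_lt (n : ℕ) {ℓ : ℤ} (h : (n : ℤ) < ℓ) : genStirling a b c n ℓ = 0 := by
  induction n generalizing ℓ with
  | zero => simp [genStirling]; omega
  | succ n ih => rw [genStirling, ih (by omega), ih (by omega), mul_zero, add_zero]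

lemma sum_genStirling_succ (n : ℕ) (w : ℂ) (T : ℕ → ℂ) :
    ∑ ℓ ∈ Finset.range (n + 1 + 1), w ^ (n + 1 - ℓ) * (genStirling a b c (n + 1) ℓ : ℂ) * T ℓ =
      ∑ ℓ ∈ Finset.range (n + 1), w ^ (n - ℓ) * (genStirling a b c n ℓ : ℂ) *
        (w * (a * ℓ - b * n + c : ℝ) * T ℓ + T (ℓ + 1)) := by
  have hsplit (ℓ : ℕ) : w ^ (n + 1 - ℓ) * (genStirling a b c (n + 1) ℓ : ℂ) * T ℓ =
      w ^ (n + 1 - ℓ) * ((a * ℓ - b * n + c) * genStirling a b c n ℓ : ℝ) * T ℓ +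
        w ^ (n + 1 - ℓ) * (genStirling a b c n (ℓ - 1) : ℂ) * T ℓ := by
    rw [genStirling, Int.cast_natCast]
    push_cast
    ring
  simp only [hsplit, mul_add, Finset.sum_add_distrib]
  congr 1
  · rw [Finset.sum_range_succ, genStirling_of_lt a b c n (by omega)]
    refine (add_eq_left.mpr (by simp)).trans (Finset.sum_congr rfl fun ℓ hℓ => ?_)
    rw [Nat.sub_add_comm (Finset.mem_range_succ_iff.mp hℓ), pow_succ]
    push_cast
    ring
  · rw [Finset.sum_range_succ', genStirling_of_neg a b c n (by omega)]
    simp [mul_assoc]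

end genStirling

section

variable {g : ℝ → ℂ} (hg : ContDiff ℝ (⊤ : ℕ∞) g) (c : ℝ)
include hg

lemma Dop_iterate_zetaPow_mul (n : ℕ) :
    Dop^[n] (fun z => zetaPow c z * g z) =
      fun z => zetaPow (c - n) z *
        ∑ ℓ ∈ Finset.range (n + 1),
          (2 * π * Complex.I) ^ (n - ℓ) * (alphaSt c n ℓ : ℂ) * iteratedDeriv ℓ g z := by
  induction n with
  | zero => funext z; simp [alphaSt, genStirling]
  | succ n ih =>
    rw [Function.iterate_succ_apply', ih]
    funext z
    have hP : HasDerivAt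
        (fun y => ∑ ℓ ∈ Finset.range (n + 1),
          (2 * π * Complex.I) ^ (n - ℓ) * (alphaSt c n ℓ : ℂ) * iteratedDeriv ℓ g y)
        (∑ ℓ ∈ Finset.range (n + 1),
          (2 * π * Complex.I) ^ (n - ℓ) * (alphaSt c n ℓ : ℂ) * iteratedDeriv (ℓ + 1) g z) z :=
      HasDerivAt.fun_sum fun ℓ _ => by
        rw [iteratedDeriv_succ]
        have hℓ := hg.differentiable_iteratedDeriv ℓ (mod_cast ENat.natCast_lt_top ℓ)
        exact (hℓ z).hasDerivAt.const_mul _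
    rw [Dop_zetaPow_mul_apply hP]
    simp only [alphaSt]
    rw [sum_genStirling_succ,
      show c - ((n + 1 : ℕ) : ℝ) = c - n - 1 by push_cast; ring]
    congr 1
    rw [Finset.mul_sum, ← Finset.sum_add_distrib]
    refine Finset.sum_congr rfl fun ℓ _ => ?_
    push_cast
    ring

lemma iteratedDeriv_zetaPow_mul (n : ℕ) :
    iteratedDeriv n (fun z => zetaPow c z * g z) =
      fun z => ∑ ℓ ∈ Finset.range (n + 1),
        (2 * π * Complex.I) ^ (n - ℓ) * (betaSt c n ℓ : ℂ) *
          (zetaPow (c + ℓ) z * (Dop^[ℓ] g) z) := by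
  induction n with
  | zero => funext z; simp [betaSt, genStirling]
  | succ n ih =>
    rw [iteratedDeriv_succ, ih]
    funext z
    have hQ : HasDerivAt
        (fun y => ∑ ℓ ∈ Finset.range (n + 1),
          (2 * π * Complex.I) ^ (n - ℓ) * (betaSt c n ℓ : ℂ) * (zetaPow (c + ℓ) y * (Dop^[ℓ] g) y))
        (∑ ℓ ∈ Finset.range (n + 1), (2 * π * Complex.I) ^ (n - ℓ) * (betaSt c n ℓ : ℂ) *
          (zetaPow (c + ℓ) z * (2 * π * Complex.I * (c + ℓ : ℝ) * (Dop^[ℓ] g) z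
            + deriv (Dop^[ℓ] g) z))) z :=
      HasDerivAt.fun_sum fun ℓ _ => by
        have hℓ := (contDiff_Dop_iterate hg ℓ).differentiable (by simp)
        exact ((hℓ z).hasDerivAt.zetaPow_mul _).const_mul _
    rw [hQ.deriv]
    simp only [betaSt]
    rw [sum_genStirling_succ]
    refine Finset.sum_congr rfl fun ℓ _ => ?_
    rw [Function.iterate_succ_apply', Nat.cast_succ, ← add_assoc, zetaPow_succ_mul_Dop]
    push_cast
    ring

end

/-- Lemma 2.7.  Let `g : ℝ → ℂ` be `C^∞`, `c ∈ ℝ`, `n ∈ ℕ₀`.  Then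
`(ζ⁻¹ ∂/∂z)ⁿ (ζ^c g) = ζ^{c-n} Σ_{ℓ=0}^n (2πi)^{n-ℓ} α_c(n,ℓ) g^{(ℓ)}` and
`∂ⁿ/∂zⁿ (ζ^c g) = Σ_{ℓ=0}^n (2πi)^{n-ℓ} β_c(n,ℓ) ζ^{c+ℓ} (ζ⁻¹ ∂/∂z)^ℓ g`. -/
theorem zetaPow_derivative_formulas (g : ℝ → ℂ) (hg : ContDiff ℝ (⊤ : ℕ∞) g)
    (c : ℝ) (n : ℕ) :
    (Dop^[n] (fun z => zetaPow c z * g z) =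
      fun z => zetaPow (c - n) z *
        ∑ ℓ ∈ Finset.range (n + 1),
          (2 * Real.pi * Complex.I) ^ (n - ℓ) * (alphaSt c n ℓ : ℂ) * iteratedDeriv ℓ g z) ∧
    (iteratedDeriv n (fun z => zetaPow c z * g z) =
      fun z => ∑ ℓ ∈ Finset.range (n + 1),
        (2 * Real.pi * Complex.I) ^ (n - ℓ) * (betaSt c n ℓ : ℂ) *
          (zetaPow (c + ℓ) z * (Dop^[ℓ] g) z)) :=
  ⟨Dop_iterate_zetaPow_mul hg c n, iteratedDeriv_zetaPow_mul hg c n⟩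
end
end
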